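/- arXiv:2406.15184 — 2 statements merged into one kernel-verified Lean document; each statement's English description precedes it below -/
import Mathlib

section
/- Csákány–Gavalcová Theorem on the dual discriminator. Let A be a set with |A| ≥ 2 and let d be the ternary dual discriminator operation on A, defined by d(a,b,c) = a if a = b and d(a,b,c) = c otherwise. Then the clone generated by d is a minimal clone on A. -/
universe u

/-- The type of finitary operations (of positive arity `n + 1`) on `A`. -/
abbrev Ops (A : Type u) : Type u := Σ n : ℕ, (Fin (n + 1) → A) → A

/-- A set of finitary operations on `A` is a clone if it contains all projection
operations and is closed under composition. -/
def IsClone {A : Type u} (C : Set (Ops A)) : Prop :=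
  (∀ (n : ℕ) (i : Fin (n + 1)), (⟨n, fun x => x i⟩ : Ops A) ∈ C) ∧
  ∀ (n m : ℕ) (f : (Fin (n + 1) → A) → A) (g : Fin (n + 1) → (Fin (m + 1) → A) → A),
    (⟨n, f⟩ : Ops A) ∈ C → (∀ i, (⟨m, g i⟩ : Ops A) ∈ C) →
    (⟨m, fun x => f fun i => g i x⟩ : Ops A) ∈ C

/-- The clone generated by a set `F` of operations: the least clone containing `F`. -/
def cloneGen {A : Type u} (F : Set (Ops A)) : Set (Ops A) :=
  ⋂₀ {C : Set (Ops A) | IsClone C ∧ F ⊆ C}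

/-- The clone of all projection operations on `A`. -/
def projClone (A : Type u) : Set (Ops A) :=
  {f : Ops A | ∃ i : Fin (f.1 + 1), f.2 = fun x => x i}

/-- A clone `M` is maximal if it is a proper subclone of the clone of all operations
and the clone of all operations is the only clone properly containing it. -/
def IsMaximalClone {A : Type u} (M : Set (Ops A)) : Prop :=
  IsClone M ∧ M ≠ Set.univ ∧
    ∀ D : Set (Ops A), IsClone D → M ⊆ D → D = M ∨ D = Set.univ

/-- A clone `C` is minimal if the clone of projections is its unique proper subclone. -/
def IsMinimalClone {A : Type u} (C : Set (Ops A)) : Prop :=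
  IsClone C ∧ C ≠ projClone A ∧
    ∀ D : Set (Ops A), IsClone D → D ⊆ C → D = projClone A ∨ D = C

/-- An `n`-ary operation `f` preserves a `k`-ary relation `ρ` if applying `f`
coordinatewise to tuples from `ρ` always yields a tuple in `ρ`. -/
def Preserves {A : Type u} {n k : ℕ} (f : (Fin n → A) → A) (ρ : Set (Fin k → A)) : Prop :=
  ∀ t : Fin n → Fin k → A, (∀ i, t i ∈ ρ) → (fun j => f fun i => t i j) ∈ ρ

/-- `Pol ρ` is the clone of all operations preserving the relation `ρ`. -/
def Pol {A : Type u} {k : ℕ} (ρ : Set (Fin k → A)) : Set (Ops A) :=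
  {f : Ops A | Preserves f.2 ρ}

section DualDiscriminatorAux

variable {A : Type u} [DecidableEq A]

/-- The dual discriminator operation. -/
def ddOp (A : Type u) [DecidableEq A] : (Fin 3 → A) → A :=
  fun x => if x 0 = x 1 then x 0 else x 2

/-- The clone of all operations preserving every relation preserved by the
dual discriminator. -/
def Kc (A : Type u) [DecidableEq A] : Set (Ops A) :=
  {F : Ops A | ∀ (k : ℕ) (ρ : Set (Fin k → A)), Preserves (ddOp A) ρ → Preserves F.2 ρ}

theorem isClone_cloneGen {A : Type u} (F : Set (Ops A)) : IsClone (cloneGen F) := by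
  constructor
  · intro n i C hC
    exact hC.1.1 n i
  · intro n m f g hf hg C hC
    exact hC.1.2 n m f g (hf C hC) (fun i => hg i C hC)

theorem cloneGen_le {A : Type u} {F C : Set (Ops A)} (hC : IsClone C) (hFC : F ⊆ C) :
    cloneGen F ⊆ C :=
  Set.sInter_subset_of_mem ⟨hC, hFC⟩

theorem mem_cloneGen_self {A : Type u} {F : Set (Ops A)} {f : Ops A} (hf : f ∈ F) :
    f ∈ cloneGen F := fun _C hC => hC.2 hf

theorem isClone_Kc : IsClone (Kc A) := by
  constructor
  · intro n i k ρ hρ t ht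
    have : (fun j => t i j) = t i := rfl
    exact this ▸ ht i
  · intro n m f g hf hg k ρ hρ t ht
    exact hf k ρ hρ (fun i j => g i fun l => t l j) (fun i => hg i k ρ hρ t ht)

theorem dd_mem_Kc : (⟨2, ddOp A⟩ : Ops A) ∈ Kc A := fun _k _ρ hρ => hρ

/-- conservativity -/
theorem Kc.conserv {n : ℕ} {f : (Fin (n + 1) → A) → A} (hf : (⟨n, f⟩ : Ops A) ∈ Kc A)
    (x : Fin (n + 1) → A) : ∃ i, f x = x i := by
  classical
  have hρ : Preserves (ddOp A) ({t : Fin 1 → A | ∃ i, t 0 = x i}) := by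
    intro t ht
    obtain ⟨i1, e1⟩ := ht 0
    obtain ⟨i3, e3⟩ := ht 2
    by_cases hc : t 0 0 = t 1 0
    · refine ⟨i1, ?_⟩
      show (if t 0 0 = t 1 0 then t 0 0 else t 2 0) = x i1
      rw [if_pos hc]; exact e1
    · refine ⟨i3, ?_⟩
      show (if t 0 0 = t 1 0 then t 0 0 else t 2 0) = x i3
      rw [if_neg hc]; exact e3
  have happ := hf 1 _ hρ (fun i _ => x i) (fun i => ⟨i, rfl⟩)
  obtain ⟨i, hi⟩ := happ
  exact ⟨i, hi⟩

/-- kernel uniformity -/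
theorem Kc.samek {n : ℕ} {f : (Fin (n + 1) → A) → A} (hf : (⟨n, f⟩ : Ops A) ∈ Kc A)
    {x y : Fin (n + 1) → A} (hxy : ∀ i j, x i = x j ↔ y i = y j) :
    ∃ i, f x = x i ∧ f y = y i := by
  classical
  have hρ : Preserves (ddOp A) ({t : Fin 2 → A | ∃ i, t 0 = x i ∧ t 1 = y i}) := by
    intro t ht
    obtain ⟨i1, e10, e11⟩ := ht 0
    obtain ⟨i2, e20, e21⟩ := ht 1
    obtain ⟨i3, e30, e31⟩ := ht 2
    by_cases hc : x i1 = x i2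
    · refine ⟨i1, ?_, ?_⟩
      · show (if t 0 0 = t 1 0 then t 0 0 else t 2 0) = x i1
        rw [if_pos (by rw [e10, e20]; exact hc)]; exact e10
      · show (if t 0 1 = t 1 1 then t 0 1 else t 2 1) = y i1
        rw [if_pos (by rw [e11, e21]; exact (hxy i1 i2).mp hc)]; exact e11
    · refine ⟨i3, ?_, ?_⟩
      · show (if t 0 0 = t 1 0 then t 0 0 else t 2 0) = x i3
        rw [if_neg (by rw [e10, e20]; exact hc)]; exact e30
      · show (if t 0 1 = t 1 1 then t 0 1 else t 2 1) = y i3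
        rw [if_neg (by rw [e11, e21]; exact fun hcc => hc ((hxy i1 i2).mpr hcc))]; exact e31
  have hcols : ∀ i, (fun j : Fin 2 => if j = 0 then x i else y i) ∈
      ({t : Fin 2 → A | ∃ i, t 0 = x i ∧ t 1 = y i}) := by
    intro i
    refine ⟨i, ?_, ?_⟩
    · show (if (0 : Fin 2) = 0 then x i else y i) = x i
      rw [if_pos rfl]
    · show (if (1 : Fin 2) = 0 then x i else y i) = y i
      rw [if_neg (by decide : ¬(1 : Fin 2) = 0)]
  have happ := hf 2 _ hρ (fun i j => if j = 0 then x i else y i) hcols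
  obtain ⟨i, h1, h2⟩ := happ
  have h1' : f (fun i' => if (0 : Fin 2) = 0 then x i' else y i') = x i := h1
  have h2' : f (fun i' => if (1 : Fin 2) = 0 then x i' else y i') = y i := h2
  rw [show (fun i' => if (0 : Fin 2) = 0 then x i' else y i') = x from
    funext fun i' => if_pos rfl] at h1'
  rw [show (fun i' => if (1 : Fin 2) = 0 then x i' else y i') = y from
    funext fun i' => if_neg (by decide)] at h2'
  exact ⟨i, h1', h2'⟩

/-- the semiprojection killer -/
theorem Kc.killer {n : ℕ} {f : (Fin (n + 1) → A) → A} (hf : (⟨n, f⟩ : Ops A) ∈ Kc A)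
    {a b : A} (hab : a ≠ b) {k : Fin (n + 1)}
    (h0 : f (fun _ => a) = a) (h1 : f (fun i => if i = k then b else a) = b)
    (y : Fin (n + 1) → A) : f y = y k := by
  classical
  set r := y k with hr
  have hρ : Preserves (ddOp A)
      ({t : Fin 3 → A | (t 0 = a ∧ t 1 = a) ∨ (t 0 = a ∧ t 1 = b ∧ t 2 = r)}) := by
    intro t ht
    have ht0 := ht 0
    have ht1 := ht 1
    have ht2 := ht 2
    have g0 : (if t 0 0 = t 1 0 then t 0 0 else t 2 0) = a := by
      have e00 : t 0 0 = a := by rcases ht0 with ⟨e, _⟩ | ⟨e, _, _⟩ <;> exact e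
      have e10 : t 1 0 = a := by rcases ht1 with ⟨e, _⟩ | ⟨e, _, _⟩ <;> exact e
      rw [e00, e10]; simp
    have key : ((if t 0 1 = t 1 1 then t 0 1 else t 2 1) = a) ∨
        ((if t 0 1 = t 1 1 then t 0 1 else t 2 1) = b ∧
         (if t 0 2 = t 1 2 then t 0 2 else t 2 2) = r) := by
      rcases ht0 with ⟨e00, e01⟩ | ⟨e00, e01, e02⟩ <;>
      rcases ht1 with ⟨e10, e11⟩ | ⟨e10, e11, e12⟩ <;>
      rcases ht2 with ⟨e20, e21⟩ | ⟨e20, e21, e22⟩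
      · exact Or.inl (by rw [e01, e11]; simp)
      · exact Or.inl (by rw [e01, e11]; simp)
      · exact Or.inl (by rw [e01, e11, e21]; simp [hab])
      · exact Or.inr ⟨by rw [e01, e11, e21]; simp [hab],
          by rw [e12, e22]; split_ifs with hc <;> simp [hc]⟩
      · exact Or.inl (by rw [e01, e11, e21]; simp [Ne.symm hab])
      · exact Or.inr ⟨by rw [e01, e11, e21]; simp [Ne.symm hab],
          by rw [e02, e22]; simp⟩
      · exact Or.inr ⟨by rw [e01, e11]; simp, by rw [e02, e12]; simp⟩
      · exact Or.inr ⟨by rw [e01, e11]; simp, by rw [e02, e12]; simp⟩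
    rcases key with hk | ⟨hk1, hk2⟩
    · exact Or.inl ⟨g0, hk⟩
    · exact Or.inr ⟨g0, hk1, hk2⟩
  have hcols : ∀ i, (fun j : Fin 3 =>
      if j = 0 then a else if j = 1 then (if i = k then b else a) else y i) ∈
      ({t : Fin 3 → A | (t 0 = a ∧ t 1 = a) ∨ (t 0 = a ∧ t 1 = b ∧ t 2 = r)}) := by
    intro i
    by_cases hik : i = k
    · exact Or.inr ⟨by simp, by simp [hik], by simp [hik, hr]⟩
    · exact Or.inl ⟨by simp, by simp [hik]⟩
  have happ := hf 3 _ hρ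
    (fun i j => if j = 0 then a else if j = 1 then (if i = k then b else a) else y i) hcols
  have hrow1 : (fun i => if (1 : Fin 3) = 0 then a else
      if (1 : Fin 3) = 1 then (if i = k then b else a) else y i)
      = fun i => if i = k then b else a := by
    funext i; simp
  have hrow2 : (fun i => if (2 : Fin 3) = 0 then a else
      if (2 : Fin 3) = 1 then (if i = k then b else a) else y i) = y := by
    funext i; simp
  rcases happ with ⟨h00, h11⟩ | ⟨h00, h11, h22⟩
  · exfalso
    have h11' : f (fun i => if (1 : Fin 3) = 0 then a else
        if (1 : Fin 3) = 1 then (if i = k then b else a) else y i) = a := h11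
    rw [hrow1, h1] at h11'
    exact hab h11'.symm
  · have h22' : f (fun i => if (2 : Fin 3) = 0 then a else
        if (2 : Fin 3) = 1 then (if i = k then b else a) else y i) = r := h22
    rw [hrow2] at h22'
    exact h22'

theorem fin3_funext {x y : Fin 3 → A} (h0 : x 0 = y 0) (h1 : x 1 = y 1) (h2 : x 2 = y 2) :
    x = y := by
  funext j
  fin_cases j
  · exact h0
  · exact h1
  · exact h2

/-- Any ternary member of `Kc` satisfying the majority identities yields the
dual discriminator in any clone containing it. -/
theorem dd_of_majority {g : (Fin 3 → A) → A} (hgK : (⟨2, g⟩ : Ops A) ∈ Kc A)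
    (maj : ∀ (p : Fin 3) (u v : A), g (fun j => if j = p then v else u) = u)
    {D : Set (Ops A)} (hD : IsClone D) (hgD : (⟨2, g⟩ : Ops A) ∈ D) :
    (⟨2, ddOp A⟩ : Ops A) ∈ D := by
  classical
  have ddval : ∀ x : Fin 3 → A, ddOp A x = if x 0 = x 1 then x 0 else x 2 := fun _ => rfl
  by_cases h3 : ∃ x : Fin 3 → A, x 0 ≠ x 1 ∧ x 0 ≠ x 2 ∧ x 1 ≠ x 2
  case neg =>
    push_neg at h3
    have hg : g = ddOp A := by
      funext x
      rw [ddval]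
      by_cases e01 : x 0 = x 1
      · rw [if_pos e01]
        rw [show x = fun j : Fin 3 => if j = 2 then x 2 else x 0 from
          fin3_funext rfl e01.symm rfl]
        exact maj 2 (x 0) (x 2)
      · rw [if_neg e01]
        by_cases e02 : x 0 = x 2
        · rw [show x = fun j : Fin 3 => if j = 1 then x 1 else x 0 from
            fin3_funext rfl rfl e02.symm]
          rw [maj 1 (x 0) (x 1)]
          rfl
        · have e12 : x 1 = x 2 := h3 x e01 e02
          rw [show x = fun j : Fin 3 => if j = 0 then x 0 else x 1 from
            fin3_funext rfl rfl e12.symm]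
          rw [maj 0 (x 1) (x 0)]
          rfl
    rw [show (⟨2, ddOp A⟩ : Ops A) = ⟨2, g⟩ from by rw [hg]]
    exact hgD
  case pos =>
    obtain ⟨w, hw01, hw02, hw12⟩ := h3
    obtain ⟨γ, hγ⟩ := Kc.conserv hgK w
    have hwinj : ∀ i j : Fin 3, w i = w j ↔ i = j := by
      intro i j
      fin_cases i <;> fin_cases j <;>
        simp_all [hw01, hw02, hw12, Ne.symm hw01, Ne.symm hw02, Ne.symm hw12]
    have inj_rule : ∀ x : Fin 3 → A, x 0 ≠ x 1 → x 0 ≠ x 2 → x 1 ≠ x 2 → g x = x γ := by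
      intro x h01 h02 h12
      have hxinj : ∀ i j : Fin 3, x i = x j ↔ i = j := by
        intro i j
        fin_cases i <;> fin_cases j <;>
          simp_all [h01, h02, h12, Ne.symm h01, Ne.symm h02, Ne.symm h12]
      obtain ⟨i, e1, e2⟩ := Kc.samek hgK
        (x := w) (y := x) (fun i j => (hwinj i j).trans (hxinj i j).symm)
      have : i = γ := (hwinj i γ).mp (e1.symm.trans hγ)
      rw [← this]; exact e2
    have main : ∀ σ : Fin 3 → Fin 3,
        (∀ x : Fin 3 → A, g (fun i => x (σ i)) = ddOp A x) →
          (⟨2, ddOp A⟩ : Ops A) ∈ D := by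
      intro σ hσ
      have hmem := hD.2 2 2 g (fun i x => x (σ i)) hgD (fun i => hD.1 2 (σ i))
      rw [show (⟨2, fun x : Fin 3 → A => g fun i => x (σ i)⟩ : Ops A) = ⟨2, ddOp A⟩ from by
        rw [funext hσ]] at hmem
      exact hmem
    fin_cases γ
    · -- γ = 0 : ddOp x = g (x 2, x 1, x 0)
      apply main (fun i => if i = 0 then 2 else if i = 1 then 1 else 0)
      intro x
      show g (fun i : Fin 3 => x (if i = 0 then 2 else if i = 1 then 1 else 0)) = ddOp A x
      rw [ddval]
      by_cases e01 : x 0 = x 1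
      · rw [if_pos e01]
        rw [show (fun i : Fin 3 => x (if i = 0 then (2 : Fin 3) else if i = 1 then 1 else 0))
            = fun j : Fin 3 => if j = 0 then x 2 else x 0 from
          fin3_funext rfl e01.symm rfl]
        exact maj 0 (x 0) (x 2)
      · rw [if_neg e01]
        by_cases e02 : x 0 = x 2
        · rw [show (fun i : Fin 3 => x (if i = 0 then (2 : Fin 3) else if i = 1 then 1 else 0))
              = fun j : Fin 3 => if j = 1 then x 1 else x 0 from
            fin3_funext e02.symm rfl rfl]
          rw [maj 1 (x 0) (x 1)]
          exact e02
        · by_cases e12 : x 1 = x 2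
          · rw [show (fun i : Fin 3 => x (if i = 0 then (2 : Fin 3) else if i = 1 then 1 else 0))
                = fun j : Fin 3 => if j = 2 then x 0 else x 1 from
              fin3_funext e12.symm rfl rfl]
            rw [maj 2 (x 1) (x 0)]
            exact e12
          · exact inj_rule (fun i : Fin 3 => x (if i = 0 then 2 else if i = 1 then 1 else 0))
              (fun h => e12 h.symm) (fun h => e02 h.symm) (fun h => e01 h.symm)
    · -- γ = 1 : ddOp x = g (x 0, x 2, x 1)
      apply main (fun i => if i = 0 then 0 else if i = 1 then 2 else 1)
      intro x
      show g (fun i : Fin 3 => x (if i = 0 then 0 else if i = 1 then 2 else 1)) = ddOp A x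
      rw [ddval]
      by_cases e01 : x 0 = x 1
      · rw [if_pos e01]
        rw [show (fun i : Fin 3 => x (if i = 0 then (0 : Fin 3) else if i = 1 then 2 else 1))
            = fun j : Fin 3 => if j = 1 then x 2 else x 0 from
          fin3_funext rfl rfl e01.symm]
        exact maj 1 (x 0) (x 2)
      · rw [if_neg e01]
        by_cases e02 : x 0 = x 2
        · rw [show (fun i : Fin 3 => x (if i = 0 then (0 : Fin 3) else if i = 1 then 2 else 1))
              = fun j : Fin 3 => if j = 2 then x 1 else x 0 from
            fin3_funext rfl e02.symm rfl]
          rw [maj 2 (x 0) (x 1)]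
          exact e02
        · by_cases e12 : x 1 = x 2
          · rw [show (fun i : Fin 3 => x (if i = 0 then (0 : Fin 3) else if i = 1 then 2 else 1))
                = fun j : Fin 3 => if j = 0 then x 0 else x 2 from
              fin3_funext rfl rfl e12]
            rw [maj 0 (x 2) (x 0)]
          · exact inj_rule (fun i : Fin 3 => x (if i = 0 then 0 else if i = 1 then 2 else 1))
              e02 e01 (fun h => e12 h.symm)
    · -- γ = 2 : ddOp x = g x
      apply main (fun i => i)
      intro x
      show g (fun i : Fin 3 => x i) = ddOp A x
      rw [show (fun i : Fin 3 => x i) = x from rfl, ddval]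
      by_cases e01 : x 0 = x 1
      · rw [if_pos e01]
        rw [show x = fun j : Fin 3 => if j = 2 then x 2 else x 0 from
          fin3_funext rfl e01.symm rfl]
        exact maj 2 (x 0) (x 2)
      · rw [if_neg e01]
        by_cases e02 : x 0 = x 2
        · rw [show x = fun j : Fin 3 => if j = 1 then x 1 else x 0 from
            fin3_funext rfl rfl e02.symm]
          rw [maj 1 (x 0) (x 1)]
          rfl
        · by_cases e12 : x 1 = x 2
          · rw [show x = fun j : Fin 3 => if j = 0 then x 0 else x 1 from
              fin3_funext rfl rfl e12.symm]
            rw [maj 0 (x 1) (x 0)]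
            rfl
          · exact inj_rule x e01 e02 e12

/-- Core lemma: a non-projection member of `Kc` generates the dual discriminator. -/
theorem dd_of_nonproj [Nontrivial A] {n : ℕ} {f : (Fin (n + 1) → A) → A}
    (hfK : (⟨n, f⟩ : Ops A) ∈ Kc A) (hnp : ¬∃ i, f = fun x => x i)
    {D : Set (Ops A)} (hD : IsClone D) (hfD : (⟨n, f⟩ : Ops A) ∈ D) :
    (⟨2, ddOp A⟩ : Ops A) ∈ D := by
  classical
  obtain ⟨a, b, hab⟩ := exists_pair_ne A
  rcases n with _ | n
  · -- arity 1 : f is the identity, a projection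
    exfalso
    apply hnp
    refine ⟨0, funext fun x => ?_⟩
    obtain ⟨i, hi⟩ := Kc.conserv hfK x
    rwa [Fin.eq_zero i] at hi
  -- arity at least 2
  set χ : Finset (Fin (n + 1 + 1)) → Prop := fun S => f (fun i => if i ∈ S then a else b) = a
    with hχ
  have sk : ∀ (S : Finset (Fin (n + 1 + 1))) (u v : A), u ≠ v →
      ∃ i, f (fun i => if i ∈ S then a else b) = (if i ∈ S then a else b) ∧
           f (fun i => if i ∈ S then u else v) = (if i ∈ S then u else v) := by
    intro S u v huv
    obtain ⟨i, h1, h2⟩ := Kc.samek hfK (x := fun i => if i ∈ S then a else b)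
      (y := fun i => if i ∈ S then u else v)
      (fun i j => by by_cases hi : i ∈ S <;> by_cases hj : j ∈ S <;>
        simp [hi, hj, hab, huv, Ne.symm hab, Ne.symm huv])
    exact ⟨i, h1, h2⟩
  have chi_pos : ∀ (S : Finset (Fin (n + 1 + 1))) (u v : A), u ≠ v → χ S →
      f (fun i => if i ∈ S then u else v) = u := by
    intro S u v huv hS
    obtain ⟨i, h1, h2⟩ := sk S u v huv
    by_cases hiS : i ∈ S
    · rw [if_pos hiS] at h2; exact h2
    · rw [if_neg hiS] at h1
      rw [hχ] at hS
      exact absurd (hS.symm.trans h1) hab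
  have chi_neg : ∀ (S : Finset (Fin (n + 1 + 1))) (u v : A), u ≠ v → ¬χ S →
      f (fun i => if i ∈ S then u else v) = v := by
    intro S u v huv hS
    obtain ⟨i, h1, h2⟩ := sk S u v huv
    by_cases hiS : i ∈ S
    · rw [if_pos hiS] at h1
      exact absurd h1 hS
    · rw [if_neg hiS] at h2; exact h2
  have compl_flip : ∀ S : Finset (Fin (n + 1 + 1)),
      (fun i => if i ∈ Sᶜ then a else b) = fun i => if i ∈ S then b else a := by
    intro S
    funext i
    by_cases hi : i ∈ S <;> simp [hi]
  have chi_compl_neg : ∀ S : Finset (Fin (n + 1 + 1)), ¬χ S → χ Sᶜ := by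
    intro S hS
    have h2 := chi_neg S b a (Ne.symm hab) hS
    show f (fun i => if i ∈ Sᶜ then a else b) = a
    rw [compl_flip S]
    exact h2
  have chi_compl_pos : ∀ S : Finset (Fin (n + 1 + 1)), χ S → ¬χ Sᶜ := by
    intro S hS hSc
    have h2 := chi_pos S b a (Ne.symm hab) hS
    have hSc' : f (fun i => if i ∈ Sᶜ then a else b) = a := hSc
    rw [compl_flip S] at hSc'
    exact hab (hSc'.symm.trans h2)
  by_cases hsing : ∃ k, χ {k}
  · -- f is the projection on coordinate k : contradiction
    obtain ⟨k, hk⟩ := hsing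
    exfalso
    apply hnp
    refine ⟨k, funext fun y => ?_⟩
    apply Kc.killer hfK hab (k := k) ?_ ?_ y
    · obtain ⟨i, hi⟩ := Kc.conserv hfK (fun _ => a)
      exact hi
    · have h2 := chi_pos {k} b a (Ne.symm hab) hk
      rwa [show (fun i => if i ∈ ({k} : Finset (Fin (n + 1 + 1))) then b else a)
          = fun i => if i = k then b else a from funext fun i => by
        simp [Finset.mem_singleton]] at h2
  · push_neg at hsing
    -- find a minimal χ-true set
    have hcompl0 : χ ({(0 : Fin (n + 1 + 1))}ᶜ) := chi_compl_neg _ (hsing 0)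
    have hP : ∃ c : ℕ, ∃ T : Finset (Fin (n + 1 + 1)), T.card = c ∧ χ T :=
      ⟨_, {(0 : Fin (n + 1 + 1))}ᶜ, rfl, hcompl0⟩
    obtain ⟨T, hTcard, hTχ⟩ := Nat.find_spec hP
    have hmin : ∀ T' : Finset (Fin (n + 1 + 1)), χ T' → Nat.find hP ≤ T'.card :=
      fun T' hT' => Nat.find_min' hP ⟨T', rfl, hT'⟩
    have hTne : T.Nonempty := by
      rcases Finset.eq_empty_or_nonempty T with h | h
      · exfalso
        rw [h] at hTχ
        have hempt : (fun i : Fin (n + 1 + 1) => if i ∈ (∅ : Finset (Fin (n + 1 + 1)))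
            then a else b) = fun _ => b := by
          funext i; simp
        have hx : f (fun _ => b) = a := by
          rw [← hempt]; exact hTχ
        obtain ⟨i, hi⟩ := Kc.conserv hfK (fun _ => b)
        exact hab (hx.symm.trans hi)
      · exact h
    obtain ⟨t, ht⟩ := hTne
    have hT1 : ¬χ (T.erase t) := by
      intro hc
      have h1 := hmin _ hc
      rw [Finset.card_erase_of_mem ht] at h1
      have h2 : 1 ≤ T.card := Finset.card_pos.mpr ⟨t, ht⟩
      omega
    have hT1ne : (T.erase t).Nonempty := by
      rcases Finset.eq_empty_or_nonempty (T.erase t) with h | h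
      · exfalso
        rcases (Finset.erase_eq_empty_iff T t).mp h with h' | h'
        · rw [h'] at ht
          exact absurd ht (Finset.notMem_empty t)
        · exact hsing t (h' ▸ hTχ)
      · exact h
    have hTssub : T ≠ Finset.univ := by
      intro hTu
      have h1 := hmin _ hcompl0
      rw [← hTcard, hTu, Finset.card_univ, Fintype.card_fin, Finset.card_compl,
        Finset.card_singleton, Fintype.card_fin] at h1
      omega
    have hTcne : Tᶜ.Nonempty := by
      rw [← Finset.card_pos, Finset.card_compl, Fintype.card_fin]
      have h1 : T.card < n + 1 + 1 := by
        have h2 := Finset.card_le_univ T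
        rw [Fintype.card_fin] at h2
        rcases h2.lt_or_eq with h | h
        · exact h
        · exact absurd (Finset.eq_univ_of_card T (by rw [h, Fintype.card_fin])) hTssub
      omega
    have hTc : ¬χ Tᶜ := chi_compl_pos T hTχ
    -- build the ternary majority operation
    set h3 : Fin (n + 1 + 1) → Fin 3 := fun i => if i = t then 0 else if i ∈ T then 1 else 2
      with hh3
    have hgD : (⟨2, fun x : Fin 3 → A => f fun i => x (h3 i)⟩ : Ops A) ∈ D :=
      hD.2 (n + 1) 2 f (fun i x => x (h3 i)) hfD (fun i => hD.1 2 (h3 i))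
    have hgK : (⟨2, fun x : Fin 3 → A => f fun i => x (h3 i)⟩ : Ops A) ∈ Kc A :=
      isClone_Kc.2 (n + 1) 2 f (fun i x => x (h3 i)) hfK (fun i => isClone_Kc.1 2 (h3 i))
    apply dd_of_majority hgK ?_ hD hgD
    intro p u v
    show f (fun i => if h3 i = p then v else u) = u
    by_cases huv : u = v
    · subst huv
      rw [show (fun i => if h3 i = p then u else u) = fun _ => u from
        funext fun i => by simp]
      obtain ⟨i, hi⟩ := Kc.conserv hfK (fun _ => u)
      exact hi
    · have hvu : v ≠ u := fun h => huv h.symm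
      fin_cases p
      · -- lone position 0 corresponds to the block {t}
        show f (fun i => if h3 i = 0 then v else u) = u
        rw [show (fun i => if h3 i = 0 then v else u)
            = fun i => if i ∈ ({t} : Finset (Fin (n + 1 + 1))) then v else u from
          funext fun i => by
            by_cases hit : i = t <;> by_cases hiT : i ∈ T <;>
              simp [hh3, hit, hiT, Finset.mem_singleton]]
        exact chi_neg {t} v u hvu (hsing t)
      · -- lone position 1 corresponds to the block T.erase t
        show f (fun i => if h3 i = 1 then v else u) = u
        rw [show (fun i => if h3 i = 1 then v else u)
            = fun i => if i ∈ T.erase t then v else u from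
          funext fun i => by
            by_cases hit : i = t <;> by_cases hiT : i ∈ T <;>
              simp [hh3, hit, hiT, Finset.mem_erase]]
        exact chi_neg (T.erase t) v u hvu hT1
      · -- lone position 2 corresponds to the block Tᶜ
        show f (fun i => if h3 i = 2 then v else u) = u
        rw [show (fun i => if h3 i = 2 then v else u)
            = fun i => if i ∈ Tᶜ then v else u from
          funext fun i => by
            by_cases hit : i = t <;> by_cases hiT : i ∈ T <;>
              simp [hh3, hit, hiT, Finset.mem_compl, ht]]
        exact chi_neg Tᶜ v u hvu hTc

end DualDiscriminatorAux

/-- **Csákány–Gavalcová Theorem on the dual discriminator.**  Let `A` be a set with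
`|A| ≥ 2`.  The ternary dual discriminator operation `d`, defined by `d(a,b,c) = a`
if `a = b` and `d(a,b,c) = c` otherwise, generates a minimal clone on `A`. -/
theorem dual_discriminator_minimal {A : Type u} [Nontrivial A] [DecidableEq A] :
    IsMinimalClone (cloneGen
      {(⟨2, fun x : Fin 3 → A => if x 0 = x 1 then x 0 else x 2⟩ : Ops A)}) := by
  classical
  have hdd : (⟨2, fun x : Fin 3 → A => if x 0 = x 1 then x 0 else x 2⟩ : Ops A)
      = (⟨2, ddOp A⟩ : Ops A) := rfl
  rw [hdd]
  refine ⟨isClone_cloneGen _, ?_, ?_⟩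
  · intro hEq
    have hdmem : (⟨2, ddOp A⟩ : Ops A) ∈ cloneGen {(⟨2, ddOp A⟩ : Ops A)} :=
      mem_cloneGen_self rfl
    rw [hEq] at hdmem
    obtain ⟨i, hi⟩ := hdmem
    obtain ⟨a, b, hab⟩ := exists_pair_ne A
    have hi' : ∀ x : Fin 3 → A, (if x 0 = x 1 then x 0 else x 2) = x i := fun x => congrFun hi x
    fin_cases i
    · have h := hi' (fun j => if j = 0 then a else b)
      simp [hab] at h
      exact hab h.symm
    · have h := hi' (fun j => if j = 1 then a else b)
      simp [Ne.symm hab] at h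
    · have h := hi' (fun j => if j = 2 then b else a)
      simp [hab] at h
  · intro D hDclone hDsub
    by_cases hsub : D ⊆ projClone A
    · left
      refine Set.Subset.antisymm hsub ?_
      rintro ⟨m, p⟩ ⟨i, hi⟩
      simp only at hi
      rw [show (⟨m, p⟩ : Ops A) = ⟨m, fun x => x i⟩ from by rw [hi]]
      exact hDclone.1 m i
    · right
      obtain ⟨F, hFD, hFnp⟩ := Set.not_subset.mp hsub
      obtain ⟨m, f⟩ := F
      have hKcl : cloneGen {(⟨2, ddOp A⟩ : Ops A)} ⊆ Kc A :=
        cloneGen_le isClone_Kc (by rintro G rfl; exact dd_mem_Kc)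
      have hFK : (⟨m, f⟩ : Ops A) ∈ Kc A := hKcl (hDsub hFD)
      have hnp : ¬∃ i, f = fun x => x i := fun ⟨i, hi⟩ => hFnp ⟨i, hi⟩
      have hdD : (⟨2, ddOp A⟩ : Ops A) ∈ D := dd_of_nonproj hFK hnp hDclone hFD
      exact Set.Subset.antisymm hDsub
        (cloneGen_le hDclone (by rintro G rfl; exact hdD))
end

section
/- If f is a majority operation on a set A, then every operation in the clone generated by f is either a projection or a near unanimity operation. -/
universe u

/-- A majority operation: a ternary operation satisfying
`m(x,x,y) = m(x,y,x) = m(y,x,x) = x`. -/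
def IsMajority {A : Type u} (f : (Fin 3 → A) → A) : Prop :=
  ∀ x y : A, f ![x, x, y] = x ∧ f ![x, y, x] = x ∧ f ![y, x, x] = x

/-- A near unanimity operation: an `n`-ary operation with `n ≥ 3` satisfying
`u(y,x,…,x) = u(x,y,x,…,x) = ⋯ = u(x,…,x,y) = x` for all `x, y`. -/
def IsNearUnanimity {A : Type u} {n : ℕ} (f : (Fin n → A) → A) : Prop :=
  3 ≤ n ∧ ∀ (x y : A) (i : Fin n), f (Function.update (fun _ => x) i y) = x

lemma maj_eval {A : Type u} (f : (Fin 3 → A) → A) (hf : IsMajority f) (u : Fin 3 → A) :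
    (u 0 = u 1 → f u = u 0) ∧ (u 0 = u 2 → f u = u 0) ∧ (u 1 = u 2 → f u = u 1) := by
  have hu : u = ![u 0, u 1, u 2] := by
    funext k; fin_cases k <;> rfl
  refine ⟨fun h => ?_, fun h => ?_, fun h => ?_⟩
  · rw [hu, ← h]; exact (hf (u 0) (u 2)).1
  · rw [hu, ← h]; exact (hf (u 0) (u 1)).2.1
  · rw [hu, ← h]; exact (hf (u 1) (u 0)).2.2

lemma maj_pres {A : Type u} (f : (Fin 3 → A) → A) (hf : IsMajority f) (x y c : A) :
    (⟨2, f⟩ : Ops A) ∈ Pol {p : Fin 2 → A | p 0 = x ∨ (p 0 = y ∧ p 1 = c)} := by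
  intro t ht
  have E := maj_eval f hf (fun i => t i 0)
  have E' := maj_eval f hf (fun i => t i 1)
  simp only [Set.mem_setOf_eq] at ht ⊢
  rcases ht 0 with h0 | ⟨h0, h0'⟩ <;> rcases ht 1 with h1 | ⟨h1, h1'⟩ <;>
      rcases ht 2 with h2 | ⟨h2, h2'⟩
  · exact Or.inl ((E.1 (by rw [h0, h1])).trans h0)
  · exact Or.inl ((E.1 (by rw [h0, h1])).trans h0)
  · exact Or.inl ((E.2.1 (by rw [h0, h2])).trans h0)
  · exact Or.inr ⟨(E.2.2 (by rw [h1, h2])).trans h1, (E'.2.2 (by rw [h1', h2'])).trans h1'⟩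
  · exact Or.inl ((E.2.2 (by rw [h1, h2])).trans h1)
  · exact Or.inr ⟨(E.2.1 (by rw [h0, h2])).trans h0, (E'.2.1 (by rw [h0', h2'])).trans h0'⟩
  · exact Or.inr ⟨(E.1 (by rw [h0, h1])).trans h0, (E'.1 (by rw [h0', h1'])).trans h0'⟩
  · exact Or.inr ⟨(E.1 (by rw [h0, h1])).trans h0, (E'.1 (by rw [h0', h1'])).trans h0'⟩

lemma pol_isClone {A : Type u} {k : ℕ} (ρ : Set (Fin k → A)) : IsClone (Pol ρ) := by
  constructor
  · intro n i t ht
    exact ht i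
  · intro n m F G hF hG t ht
    exact hF (fun i j => G i (fun i' => t i' j)) (fun i => hG i t ht)

lemma cloneGen_subset_pol {A : Type u} {k : ℕ} (f : (Fin 3 → A) → A)
    (ρ : Set (Fin k → A)) (hm : (⟨2, f⟩ : Ops A) ∈ Pol ρ) :
    cloneGen {(⟨2, f⟩ : Ops A)} ⊆ Pol ρ :=
  Set.sInter_subset_of_mem ⟨pol_isClone ρ, Set.singleton_subset_iff.2 hm⟩

/-- If `f` is a majority operation on a set `A`, then every operation in the clone
generated by `f` is either a projection or a near unanimity operation. -/
theorem majority_clone_proj_or_nu {A : Type u} (f : (Fin 3 → A) → A) (hf : IsMajority f) :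
    ∀ g : Ops A, g ∈ cloneGen {(⟨2, f⟩ : Ops A)} →
      (∃ i : Fin (g.1 + 1), g.2 = fun x => x i) ∨ IsNearUnanimity g.2 := by
  rintro ⟨n, gf⟩ hg
  by_cases hcase : ∀ (x y : A) (j : Fin (n + 1)),
      gf (Function.update (fun _ => x) j y) = x
  · rcases n with _ | _ | n
    · -- arity 1: projection
      left
      refine ⟨0, funext fun v => ?_⟩
      have hv : Function.update (fun _ => v 0) (0 : Fin 1) (v 0) = v := by
        funext i; fin_cases i <;> simp
      conv_lhs => rw [← hv]
      exact hcase (v 0) (v 0) 0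
    · -- arity 2: projection
      left
      refine ⟨1, funext fun v => ?_⟩
      have hv : Function.update (fun _ => v 1) (0 : Fin 2) (v 0) = v := by
        funext i; fin_cases i <;> simp
      conv_lhs => rw [← hv]
      exact hcase (v 1) (v 0) 0
    · -- arity ≥ 3: near unanimity
      right
      exact ⟨by show 3 ≤ n + 2 + 1; omega, fun x y i => hcase x y i⟩
  · push_neg at hcase
    obtain ⟨x, y, j, hj⟩ := hcase
    left
    refine ⟨j, funext fun v => ?_⟩
    have hρ := cloneGen_subset_pol f
      {p : Fin 2 → A | p 0 = x ∨ (p 0 = y ∧ p 1 = v j)} (maj_pres f hf x y (v j)) hg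
    have hmem := hρ (fun i => ![Function.update (fun _ => x) j y i, v i]) ?_
    · simp only [Set.mem_setOf_eq, Matrix.cons_val_zero, Matrix.cons_val_one,
        Matrix.head_cons] at hmem
      rcases hmem with h | ⟨_, h⟩
      · exact absurd h hj
      · exact h
    · intro i
      by_cases hij : i = j
      · subst hij
        exact Or.inr ⟨by simp, by simp⟩
      · exact Or.inl (by simp [Function.update_of_ne hij])
end
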